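/- arXiv:2203.09434 — 2 statements merged into one kernel-verified Lean document; each statement's English description precedes it below -/
import Mathlib

section
/- Let R be a commutative local ring, G a group, χ : G → R^× and b, b' : G → R functions, and let M ∈ GL₂(R) be an invertible 2×2 matrix with entries M = [[A, B], [C, D]] such that for every g ∈ G one has the matrix identity M · [[1, b(g)], [0, χ(g)]] = [[χ(g), b'(g)], [0, 1]] · M. If there exists g₀ ∈ G with χ(g₀) − 1 a unit of R, then C is a unit of R and b'(g) = A · C⁻¹ · (1 − χ(g)) for every g ∈ G. -/
/-- Let `R` be a commutative local ring, `G` a group, `χ : G → Rˣ` and `b, b' : G → R`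
functions, and let `M ∈ GL₂(R)` be an invertible `2×2` matrix with entries
`M = [[A, B], [C, D]]` such that for every `g ∈ G` one has the matrix identity
`M ⬝ [[1, b(g)], [0, χ(g)]] = [[χ(g), b'(g)], [0, 1]] ⬝ M`. If there exists `g₀ ∈ G` with
`χ(g₀) - 1` a unit of `R`, then `C` is a unit of `R` and
`b'(g) = A ⬝ C⁻¹ ⬝ (1 - χ(g))` for every `g ∈ G`. -/
theorem stmt11 (R : Type*) [CommRing R] [IsLocalRing R]
    (G : Type*) [Group G] (χ : G → Rˣ) (b b' : G → R)
    (A B C D : R)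
    (M : Matrix (Fin 2) (Fin 2) R) (hM : IsUnit M)
    (hMdef : M = !![A, B; C, D])
    (hcomm : ∀ g : G, M * !![1, b g; 0, (χ g : R)] = !![(χ g : R), b' g; 0, 1] * M)
    (g₀ : G) (hg₀ : IsUnit ((χ g₀ : R) - 1)) :
    IsUnit C ∧ ∀ g : G, b' g = A * Ring.inverse C * (1 - (χ g : R)) := by
  subst hMdef
  have key : ∀ g : G, A * (1 - (χ g : R)) = b' g * C ∧ C * b g = D * (1 - (χ g : R)) := by
    intro g
    have h := hcomm g
    have h11 := congrFun (congrFun h 0) 0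
    have h22 := congrFun (congrFun h 1) 1
    simp [Matrix.mul_apply, Fin.sum_univ_succ] at h11 h22
    exact ⟨by linear_combination h11, by linear_combination h22⟩
  have hdet : IsUnit (A * D - B * C) := by
    have := (Matrix.isUnit_iff_isUnit_det _).mp hM
    rwa [Matrix.det_fin_two_of] at this
  have hu : IsUnit (1 - (χ g₀ : R)) := by
    have := hg₀.neg; rwa [neg_sub] at this
  have hC : IsUnit C := by
    have h1 := (key g₀).1
    have h2 := (key g₀).2
    have : C * (A * b g₀ - B * (1 - (χ g₀ : R))) = (A * D - B * C) * (1 - (χ g₀ : R)) := by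
      linear_combination A * h2
    have hunit : IsUnit (C * (A * b g₀ - B * (1 - (χ g₀ : R)))) := this ▸ hdet.mul hu
    exact isUnit_of_mul_isUnit_left hunit
  refine ⟨hC, fun g => ?_⟩
  have h1 := (key g).1
  have := Ring.mul_inverse_cancel C hC
  calc b' g = b' g * C * Ring.inverse C := by rw [mul_assoc, this, mul_one]
    _ = A * (1 - (χ g : R)) * Ring.inverse C := by rw [h1]
    _ = A * Ring.inverse C * (1 - (χ g : R)) := by ring
end

section
/- Let R be a commutative ring and K a field equipped with an R-algebra structure such that the structure map R → K is injective. Let A be a commutative R-algebra that is free of finite rank r as an R-module, and let J be an ideal of A. If there exist r pairwise distinct R-algebra homomorphisms from A to K all of which vanish on J, then J = 0. -/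
/-!
By Dedekind's lemma the distinct homomorphisms `f j : A → K` are `K`-linearly independent, so
the square matrix `(f j (b i))` of their values on a basis `b` of `A` is invertible. For `x ∈ J`
this matrix kills the image in `K` of the coordinate vector of `x`, which therefore vanishes;
injectivity of `R → K` then gives `x = 0`.
-/

open Matrix

section

variable {R K A ι κ : Type*} [CommSemiring R] [Field K] [Algebra R K] [Semiring A] [Algebra R A]

noncomputable def algHomEvalMatrix (b : Module.Basis ι R A) (f : κ → A →ₐ[R] K) : Matrix κ ι K :=
  Matrix.of fun j i => f j (b i)

theorem linearIndependent_row_algHomEvalMatrix (b : Module.Basis ι R A) {f : κ → A →ₐ[R] K}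
    (hf : Function.Injective f) : LinearIndependent K (algHomEvalMatrix b f).row := by
  have hfun : LinearIndependent K fun j => ⇑(f j) :=
    (linearIndependent_monoidHom A K).comp _ (AlgHom.coe_monoidHom_injective.comp hf)
  have hlin : LinearIndependent K fun j => (f j).toLinearMap :=
    .of_comp (LinearMap.ltoFun R A K K) hfun
  exact hlin.map' _ (b.constr K).symm.ker

theorem algHomEvalMatrix_mulVec_repr [Fintype ι] (b : Module.Basis ι R A) (f : κ → A →ₐ[R] K)
    (a : A) : algHomEvalMatrix b f *ᵥ (fun i => algebraMap R K (b.repr a i)) = fun j => f j a := by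
  ext j
  conv_rhs => rw [← b.sum_repr a]
  simp [algHomEvalMatrix, mulVec, dotProduct, Algebra.smul_def, mul_comm]

theorem eq_zero_of_forall_algHom_apply_eq_zero [Fintype ι] [DecidableEq ι]
    (hinj : Function.Injective (algebraMap R K)) (b : Module.Basis ι R A)
    {f : ι → A →ₐ[R] K} (hf : Function.Injective f) {a : A} (ha : ∀ j, f j a = 0) : a = 0 := by
  have hM : Function.Injective (algHomEvalMatrix b f).mulVec :=
    mulVec_injective_iff_isUnit.mpr <|
      linearIndependent_rows_iff_isUnit.mp (linearIndependent_row_algHomEvalMatrix b hf)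
  have hcoord : (fun i => algebraMap R K (b.repr a i)) = 0 :=
    hM <| by rw [algHomEvalMatrix_mulVec_repr, mulVec_zero]; exact funext ha
  exact b.forall_coord_eq_zero_iff.mp fun i => hinj <| by simpa using congrFun hcoord i

end

/-- Let `R` be a commutative ring and `K` a field equipped with an `R`-algebra structure such
that the structure map `R → K` is injective. Let `A` be a commutative `R`-algebra that is free
of finite rank `r` as an `R`-module, and let `J` be an ideal of `A`. If there exist `r`
pairwise distinct `R`-algebra homomorphisms from `A` to `K` all of which vanish on `J`,
then `J = 0`. -/
theorem stmt12 (R : Type*) [CommRing R] (K : Type*) [Field K] [Algebra R K]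
    (hinj : Function.Injective (algebraMap R K))
    (A : Type*) [CommRing A] [Algebra R A]
    (r : ℕ) (bA : Module.Basis (Fin r) R A)
    (J : Ideal A)
    (f : Fin r → (A →ₐ[R] K)) (hf : Function.Injective f)
    (hvanish : ∀ i : Fin r, ∀ x ∈ J, f i x = 0) :
    J = ⊥ := by
  rw [eq_bot_iff]
  intro x hx
  exact eq_zero_of_forall_algHom_apply_eq_zero hinj bA hf fun j => hvanish j x hx
end
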